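/- arXiv:2001.09375 — 5 statements merged into one kernel-verified Lean document; each statement's English description precedes it below -/
import Mathlib

section
/- For any three distinct points z1, z2, z3 in the complex plane, the symmetrized form S[Re K0](z) := Σ_{σ∈S3} Re K0(z_{σ(1)}, z_{σ(2)}) · Re K0(z_{σ(1)}, z_{σ(3)}) of the real part of the Cauchy kernel equals (1/2)·c²(z1,z2,z3), where c is the Menger curvature. -/
open Complex

/-- The Cauchy kernel `K₀(w,z) = 1/(w-z)`. -/
noncomputable def K0 (w z : ℂ) : ℂ := (w - z)⁻¹

/-- Menger curvature of three points in the plane. -/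
noncomputable def menger (z1 z2 z3 : ℂ) : ℝ :=
  2 * |((starRingEnd ℂ) (z2 - z1) * (z3 - z1)).im| /
    (‖z1 - z2‖ * ‖z2 - z3‖ * ‖z3 - z1‖)

/-- Symmetrization of a real-valued kernel over the symmetric group `S₃`. -/
noncomputable def symR (H : ℂ → ℂ → ℝ) (z1 z2 z3 : ℂ) : ℝ :=
  ∑ σ : Equiv.Perm (Fin 3),
    H (![z1, z2, z3] (σ 0)) (![z1, z2, z3] (σ 1)) *
      H (![z1, z2, z3] (σ 0)) (![z1, z2, z3] (σ 2))

lemma key (a b c d : ℝ) (n12 : a ^ 2 + b ^ 2 ≠ 0)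
    (n13 : c ^ 2 + d ^ 2 ≠ 0) (n23 : (c - a) ^ 2 + (d - b) ^ 2 ≠ 0) :
    a / (a ^ 2 + b ^ 2) * (c / (c ^ 2 + d ^ 2)) +
      (-a / (a ^ 2 + b ^ 2) * ((c - a) / ((c - a) ^ 2 + (d - b) ^ 2)) +
        (-(c - a) / ((c - a) ^ 2 + (d - b) ^ 2) * (-c / (c ^ 2 + d ^ 2)) +
          (c / (c ^ 2 + d ^ 2) * (a / (a ^ 2 + b ^ 2)) +
            ((c - a) / ((c - a) ^ 2 + (d - b) ^ 2) * (-a / (a ^ 2 + b ^ 2)) +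
              -c / (c ^ 2 + d ^ 2) * (-(c - a) / ((c - a) ^ 2 + (d - b) ^ 2)))))) =
    1 / 2 * (4 * (-a * -d - -b * -c) ^ 2 /
      ((a ^ 2 + b ^ 2) * ((c - a) ^ 2 + (d - b) ^ 2) * (c ^ 2 + d ^ 2))) := by
  set P := a ^ 2 + b ^ 2 with hP
  set Q := (c - a) ^ 2 + (d - b) ^ 2 with hQ
  set R := c ^ 2 + d ^ 2 with hR
  have hD : P * Q * R ≠ 0 := mul_ne_zero (mul_ne_zero n12 n23) n13
  have t1 : a / P * (c / R) = a * c * Q / (P * Q * R) := by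
    rw [div_mul_div_comm, div_eq_div_iff (mul_ne_zero n12 n13) hD]; ring
  have t2 : -a / P * ((c - a) / Q) = -(a * (c - a) * R) / (P * Q * R) := by
    rw [div_mul_div_comm, div_eq_div_iff (mul_ne_zero n12 n23) hD]; ring
  have t3 : -(c - a) / Q * (-c / R) = (c - a) * c * P / (P * Q * R) := by
    rw [div_mul_div_comm, div_eq_div_iff (mul_ne_zero n23 n13) hD]; ring
  have t4 : c / R * (a / P) = a * c * Q / (P * Q * R) := by
    rw [div_mul_div_comm, div_eq_div_iff (mul_ne_zero n13 n12) hD]; ring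
  have t5 : (c - a) / Q * (-a / P) = -(a * (c - a) * R) / (P * Q * R) := by
    rw [div_mul_div_comm, div_eq_div_iff (mul_ne_zero n23 n12) hD]; ring
  have t6 : -c / R * (-(c - a) / Q) = (c - a) * c * P / (P * Q * R) := by
    rw [div_mul_div_comm, div_eq_div_iff (mul_ne_zero n13 n23) hD]; ring
  rw [t1, t2, t3, t4, t5, t6, ← add_div, ← add_div, ← add_div,
    ← add_div, ← add_div, ← mul_div_assoc, div_eq_div_iff hD hD, hP, hQ, hR]
  ring

theorem stmt1 (z1 z2 z3 : ℂ) (h12 : z1 ≠ z2) (h13 : z1 ≠ z3) (h23 : z2 ≠ z3) :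
    symR (fun w z => (K0 w z).re) z1 z2 z3 = (1 / 2) * (menger z1 z2 z3) ^ 2 := by
  have hm : (menger z1 z2 z3) ^ 2 = 4 * ((z2 - z1).re * (z3 - z1).im - (z2 - z1).im * (z3 - z1).re) ^ 2 / (Complex.normSq (z1 - z2) * Complex.normSq (z2 - z3) * Complex.normSq (z3 - z1)) := by
    unfold menger
    rw [div_pow]
    congr 1
    · rw [mul_pow, _root_.sq_abs, Complex.mul_im]
      simp
      ring
    · rw [mul_pow, mul_pow, Complex.sq_norm, Complex.sq_norm, Complex.sq_norm]
  rw [symR, hm]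
  rw [show (Finset.univ : Finset (Equiv.Perm (Fin 3))) = {1, Equiv.swap 0 1, Equiv.swap 0 2, Equiv.swap 1 2, Equiv.swap 0 1 * Equiv.swap 1 2, Equiv.swap 1 2 * Equiv.swap 0 1} from by decide]
  rw [Finset.sum_insert (by decide), Finset.sum_insert (by decide), Finset.sum_insert (by decide), Finset.sum_insert (by decide), Finset.sum_insert (by decide), Finset.sum_singleton]
  simp only [Equiv.Perm.coe_mul, Function.comp_apply, Equiv.Perm.one_apply,
    Equiv.swap_apply_left, Equiv.swap_apply_right, Equiv.swap_apply_of_ne_of_ne,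
    show ((Equiv.swap (0:Fin 3) 1) 2 = 2) from by decide,
    show ((Equiv.swap (0:Fin 3) 2) 1 = 1) from by decide,
    show ((Equiv.swap (1:Fin 3) 2) 0 = 0) from by decide,
    Matrix.cons_val_zero, Matrix.cons_val_one, Matrix.head_cons,
    show (![z1,z2,z3] 2 = z3) from rfl]
  simp only [K0, Complex.inv_re]
  rw [show z2 - z1 = -(z1 - z2) from by ring, show z3 - z1 = -(z1 - z3) from by ring,
      show z3 - z2 = -(z2 - z3) from by ring]
  simp only [Complex.normSq_neg, Complex.neg_re, Complex.neg_im]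
  have n12 : Complex.normSq (z1 - z2) ≠ 0 := by simpa [Complex.normSq_eq_zero, sub_eq_zero] using h12
  have n13 : Complex.normSq (z1 - z3) ≠ 0 := by simpa [Complex.normSq_eq_zero, sub_eq_zero] using h13
  have n23 : Complex.normSq (z2 - z3) ≠ 0 := by simpa [Complex.normSq_eq_zero, sub_eq_zero] using h23
  have he : (z2 - z3).re = (z1 - z3).re - (z1 - z2).re := by
    simp only [Complex.sub_re]; ring
  have hp : Complex.normSq (z1 - z2) = (z1 - z2).re ^ 2 + (z1 - z2).im ^ 2 := by
    rw [Complex.normSq_apply]; ring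
  have hq : Complex.normSq (z2 - z3) =
      ((z1 - z3).re - (z1 - z2).re) ^ 2 + ((z1 - z3).im - (z1 - z2).im) ^ 2 := by
    rw [Complex.normSq_apply]; simp only [Complex.sub_re, Complex.sub_im]; ring
  have hr : Complex.normSq (z1 - z3) = (z1 - z3).re ^ 2 + (z1 - z3).im ^ 2 := by
    rw [Complex.normSq_apply]; ring
  rw [hp] at n12; rw [hq] at n23; rw [hr] at n13
  rw [he, hp, hq, hr]
  exact key _ _ _ _ n12 n13 n23
end

section
/- For any three distinct points z1, z2, z3 in the complex plane, the symmetrized form S[Im K0](z) := Σ_{σ∈S3} Im K0(z_{σ(1)}, z_{σ(2)}) · Im K0(z_{σ(1)}, z_{σ(3)}) of the imaginary part of the Cauchy kernel equals (1/2)·c²(z1,z2,z3), where c is the Menger curvature. -/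
open Complex

private lemma key_frac (p q A B C D : ℝ) (hA : A ≠ 0) (hB : B ≠ 0) (hC : C ≠ 0)
    (h : p*q*C + p*(p-q)*B + q*(q-p)*A = D^2) :
    - -p / A * (- -q / B) +
      (-p / A * (-(p - q) / C) +
        (-(q - p) / C * (-q / B) +
          (- -q / B * (- -p / A) +
            (-(p - q) / C * (-p / A) + -q / B * (-(q - p) / C))))) =
      1 / 2 * (2 ^ 2 * D ^ 2 / (A * C * B)) := by
  have e : - -p / A * (- -q / B) +
      (-p / A * (-(p - q) / C) +
        (-(q - p) / C * (-q / B) +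
          (- -q / B * (- -p / A) +
            (-(p - q) / C * (-p / A) + -q / B * (-(q - p) / C))))) =
      2 * (p*q*C + p*(p-q)*B + q*(q-p)*A) / (A*B*C) := by
    field_simp
    ring
  rw [e, h]
  field_simp

theorem stmt2 (z1 z2 z3 : ℂ) (h12 : z1 ≠ z2) (h13 : z1 ≠ z3) (h23 : z2 ≠ z3) :
    symR (fun w z => (K0 w z).im) z1 z2 z3 = (1 / 2) * (menger z1 z2 z3) ^ 2 := by
  have huniv : (Finset.univ : Finset (Equiv.Perm (Fin 3))) =
      {1, Equiv.swap 0 1, Equiv.swap 0 2, Equiv.swap 1 2,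
       Equiv.swap 0 1 * Equiv.swap 1 2, Equiv.swap 0 2 * Equiv.swap 1 2} := by decide
  rw [symR, huniv]
  rw [Finset.sum_insert (by decide), Finset.sum_insert (by decide),
    Finset.sum_insert (by decide), Finset.sum_insert (by decide),
    Finset.sum_insert (by decide), Finset.sum_singleton]
  rw [show ((1 : Equiv.Perm (Fin 3)) 0) = 0 by decide,
    show ((1 : Equiv.Perm (Fin 3)) 1) = 1 by decide,
    show ((1 : Equiv.Perm (Fin 3)) 2) = 2 by decide,
    show ((Equiv.swap 0 1 : Equiv.Perm (Fin 3)) 0) = 1 by decide,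
    show ((Equiv.swap 0 1 : Equiv.Perm (Fin 3)) 1) = 0 by decide,
    show ((Equiv.swap 0 1 : Equiv.Perm (Fin 3)) 2) = 2 by decide,
    show ((Equiv.swap 0 2 : Equiv.Perm (Fin 3)) 0) = 2 by decide,
    show ((Equiv.swap 0 2 : Equiv.Perm (Fin 3)) 1) = 1 by decide,
    show ((Equiv.swap 0 2 : Equiv.Perm (Fin 3)) 2) = 0 by decide,
    show ((Equiv.swap 1 2 : Equiv.Perm (Fin 3)) 0) = 0 by decide,
    show ((Equiv.swap 1 2 : Equiv.Perm (Fin 3)) 1) = 2 by decide,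
    show ((Equiv.swap 1 2 : Equiv.Perm (Fin 3)) 2) = 1 by decide,
    show ((Equiv.swap 0 1 * Equiv.swap 1 2 : Equiv.Perm (Fin 3)) 0) = 1 by decide,
    show ((Equiv.swap 0 1 * Equiv.swap 1 2 : Equiv.Perm (Fin 3)) 1) = 2 by decide,
    show ((Equiv.swap 0 1 * Equiv.swap 1 2 : Equiv.Perm (Fin 3)) 2) = 0 by decide,
    show ((Equiv.swap 0 2 * Equiv.swap 1 2 : Equiv.Perm (Fin 3)) 0) = 2 by decide,
    show ((Equiv.swap 0 2 * Equiv.swap 1 2 : Equiv.Perm (Fin 3)) 1) = 0 by decide,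
    show ((Equiv.swap 0 2 * Equiv.swap 1 2 : Equiv.Perm (Fin 3)) 2) = 1 by decide]
  simp only [Matrix.cons_val_zero, Matrix.cons_val_one, Matrix.head_cons,
    Matrix.cons_val_two, Matrix.tail_cons]
  have e12 : z1 - z2 = -(z2 - z1) := by ring
  have e13 : z1 - z3 = -(z3 - z1) := by ring
  have e23 : z2 - z3 = (z2 - z1) - (z3 - z1) := by ring
  have e32 : z3 - z2 = (z3 - z1) - (z2 - z1) := by ring
  set a := z2 - z1 with ha
  set b := z3 - z1 with hb
  have hA : Complex.normSq a ≠ 0 := by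
    simpa [ha, Complex.normSq_eq_zero, sub_eq_zero] using h12.symm
  have hB : Complex.normSq b ≠ 0 := by
    simpa [hb, Complex.normSq_eq_zero, sub_eq_zero] using h13.symm
  have hC : Complex.normSq (a - b) ≠ 0 := by
    rw [show a - b = z2 - z3 by rw [ha, hb]; ring]
    simpa [Complex.normSq_eq_zero, sub_eq_zero] using h23
  rw [menger, div_pow, mul_pow, mul_pow, mul_pow, _root_.sq_abs, Complex.sq_norm,
    Complex.sq_norm, Complex.sq_norm]
  simp only [K0, e12, e13, e23, e32, Complex.inv_im, Complex.normSq_neg, Complex.neg_im]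
  simp only [← ha, ← hb]
  rw [show Complex.normSq (b - a) = Complex.normSq (a - b) by
    rw [show b - a = -(a - b) by ring, Complex.normSq_neg]]
  rw [show (a - b).im = a.im - b.im from Complex.sub_im a b,
    show (b - a).im = b.im - a.im from Complex.sub_im b a]
  exact key_frac a.im b.im (Complex.normSq a) (Complex.normSq b)
    (Complex.normSq (a - b)) (((starRingEnd ℂ) a * b).im) hA hB hC (by
      simp only [Complex.normSq_apply, Complex.sub_re, Complex.sub_im, Complex.mul_im,
        Complex.conj_re, Complex.conj_im]
      ring)
end

section
/- Let A : J → ℝ be C¹ with A' Lipschitz with constant M, i.e. |A'(x) − A'(y)| ≤ M|x−y| for all x, y ∈ J. Then for any three distinct points x1, x2, x3 ∈ J, the quantity S[Re K_Γ](z) = 2·Σ_{j} (1/(s²(x_j)·ℓ_k²·ℓ_l²)) · [∫_{x_k}^{x_j}(A'(t)−A'(x_j))dt] · [∫_{x_l}^{x_j}(A'(t)−A'(x_j))dt] satisfies |S[Re K_Γ](z)| ≤ (3/2)·M², where s²(x) = 1 + A'(x)², ℓ_j² = (x_l−x_k)² + (A(x_l)−A(x_k))², and for each j, {k,l} = {1,2,3}\{j}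 with k < l. -/
/-!
Each of the three summands is at most `M² / 4` in absolute value. Since `A'` is `M`-Lipschitz,
`|∫_{x_k}^{x_j} (A'(t) - A'(x_j)) dt| ≤ ∫ M |t - x_j| dt = (M / 2) (x_j - x_k)²`, while in the
denominator `s²(x_j) ≥ 1` and each chord length `ℓ²` dominates the corresponding horizontal
distance squared, so the two factors `(x_j - x_k)²` and `(x_j - x_l)²` cancel.
-/

open intervalIntegral Set
open scoped Interval

lemma abs_integral_le_of_abs_le_mul_abs_sub {g : ℝ → ℝ} {a b M : ℝ}
    (hg : ∀ t ∈ Ι a b, |g t| ≤ M * |t - b|) :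
    |∫ t in a..b, g t| ≤ M / 2 * (a - b) ^ 2 := by
  rcases le_total a b with hab | hba
  · calc |∫ t in a..b, g t| ≤ ∫ t in a..b, M * (b - t) := by
          refine norm_integral_le_of_norm_le (f := g) hab (.of_forall fun t ht => ?_)
            ((by fun_prop : Continuous fun t => M * (b - t)).intervalIntegrable _ _)
          have := hg t (uIoc_of_le hab ▸ ht)
          rwa [abs_sub_comm, abs_of_nonneg (sub_nonneg.2 ht.2)] at this
      _ = M / 2 * (a - b) ^ 2 := by
          rw [integral_const_mul, integral_comp_sub_left (fun x => x), integral_id]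
          ring
  · calc |∫ t in a..b, g t| = |∫ t in b..a, g t| := by rw [integral_symm, abs_neg]
      _ ≤ ∫ t in b..a, M * (t - b) := by
          refine norm_integral_le_of_norm_le (f := g) hba (.of_forall fun t ht => ?_)
            ((by fun_prop : Continuous fun t => M * (t - b)).intervalIntegrable _ _)
          have := hg t (uIoc_of_ge hba ▸ ht)
          rwa [abs_of_nonneg (sub_nonneg.2 ht.1.le)] at this
      _ = M / 2 * (a - b) ^ 2 := by
          rw [integral_const_mul, integral_comp_sub_right (fun x => x), integral_id]
          ring

lemma abs_one_div_mul_mul_le {c p q e e' I I' M : ℝ} (hp : p ≠ 0) (hq : q ≠ 0)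
    (hI : |I| ≤ M / 2 * p ^ 2) (hI' : |I'| ≤ M / 2 * q ^ 2) :
    |1 / ((1 + c ^ 2) * (q ^ 2 + e ^ 2) * (p ^ 2 + e' ^ 2)) * I * I'| ≤ M ^ 2 / 4 := by
  have hpq : 0 < q ^ 2 * p ^ 2 := by positivity
  have hden : q ^ 2 * p ^ 2 ≤ (1 + c ^ 2) * (q ^ 2 + e ^ 2) * (p ^ 2 + e' ^ 2) :=
    calc q ^ 2 * p ^ 2 = 1 * q ^ 2 * p ^ 2 := by ring
      _ ≤ _ := by gcongr <;> exact le_add_of_nonneg_right (sq_nonneg _)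
  have hden_pos := hpq.trans_le hden
  rw [abs_mul, abs_mul, abs_of_pos (one_div_pos.2 hden_pos), mul_assoc, one_div_mul_eq_div,
    div_le_iff₀ hden_pos]
  calc |I| * |I'| ≤ M / 2 * p ^ 2 * (M / 2 * q ^ 2) :=
        mul_le_mul hI hI' (abs_nonneg _) ((abs_nonneg _).trans hI)
    _ = M ^ 2 / 4 * (q ^ 2 * p ^ 2) := by ring
    _ ≤ M ^ 2 / 4 * ((1 + c ^ 2) * (q ^ 2 + e ^ 2) * (p ^ 2 + e' ^ 2)) := by gcongr

lemma abs_two_mul_add_add_le {a b c K : ℝ} (ha : |a| ≤ K) (hb : |b| ≤ K) (hc : |c| ≤ K) :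
    |2 * (a + b + c)| ≤ 6 * K := by
  rw [abs_mul, abs_two]
  linarith [abs_add_three a b c]

theorem stmt9_general (A A' : ℝ → ℝ) (J : Set ℝ) (hJ : J.OrdConnected) (M : ℝ)
    (hLip : ∀ x ∈ J, ∀ y ∈ J, |A' x - A' y| ≤ M * |x - y|)
    (x1 x2 x3 : ℝ) (h1 : x1 ∈ J) (h2 : x2 ∈ J) (h3 : x3 ∈ J)
    (h12 : x1 ≠ x2) (h13 : x1 ≠ x3) (h23 : x2 ≠ x3) :
    |2 * ((1 / ((1 + (A' x1) ^ 2) * ((x3 - x1) ^ 2 + (A x3 - A x1) ^ 2) *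
            ((x2 - x1) ^ 2 + (A x2 - A x1) ^ 2))) *
          (∫ t in x2..x1, (A' t - A' x1)) * (∫ t in x3..x1, (A' t - A' x1)) +
        (1 / ((1 + (A' x2) ^ 2) * ((x3 - x2) ^ 2 + (A x3 - A x2) ^ 2) *
            ((x2 - x1) ^ 2 + (A x2 - A x1) ^ 2))) *
          (∫ t in x1..x2, (A' t - A' x2)) * (∫ t in x3..x2, (A' t - A' x2)) +
        (1 / ((1 + (A' x3) ^ 2) * ((x3 - x2) ^ 2 + (A x3 - A x2) ^ 2) *
            ((x3 - x1) ^ 2 + (A x3 - A x1) ^ 2))) *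
          (∫ t in x1..x3, (A' t - A' x3)) * (∫ t in x2..x3, (A' t - A' x3)))| ≤
      (3 / 2) * M ^ 2 := by
  have hintegral : ∀ a ∈ J, ∀ b ∈ J, |∫ t in a..b, (A' t - A' b)| ≤ M / 2 * (a - b) ^ 2 :=
    fun a ha b hb => abs_integral_le_of_abs_le_mul_abs_sub fun t ht =>
      hLip t (hJ.uIcc_subset ha hb (uIoc_subset_uIcc ht)) b hb
  have h21 := sub_ne_zero.2 h12.symm
  have h31 := sub_ne_zero.2 h13.symm
  have h32 := sub_ne_zero.2 h23.symm
  refine (abs_two_mul_add_add_le (K := M ^ 2 / 4) ?_ ?_ ?_).trans_eq (by ring)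
  · exact abs_one_div_mul_mul_le h21 h31 (hintegral x2 h2 x1 h1) (hintegral x3 h3 x1 h1)
  · exact abs_one_div_mul_mul_le h21 h32 ((hintegral x1 h1 x2 h2).trans_eq (by ring)) (hintegral x3 h3 x2 h2)
  · exact abs_one_div_mul_mul_le h31 h32 ((hintegral x1 h1 x3 h3).trans_eq (by ring))
      ((hintegral x2 h2 x3 h3).trans_eq (by ring))

/-- If `A'` is `M`-Lipschitz on `J`, then the symmetrized real part of the restricted Cauchy
kernel on the graph of `A` is bounded by `(3/2)·M²`. -/
theorem stmt9 (A A' : ℝ → ℝ) (J : Set ℝ) (hJ : J.OrdConnected) (M : ℝ)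
    (hd1 : ∀ x ∈ J, HasDerivAt A (A' x) x)
    (hLip : ∀ x ∈ J, ∀ y ∈ J, |A' x - A' y| ≤ M * |x - y|)
    (x1 x2 x3 : ℝ) (h1 : x1 ∈ J) (h2 : x2 ∈ J) (h3 : x3 ∈ J)
    (h12 : x1 ≠ x2) (h13 : x1 ≠ x3) (h23 : x2 ≠ x3) :
    |2 * ((1 / ((1 + (A' x1) ^ 2) * ((x3 - x1) ^ 2 + (A x3 - A x1) ^ 2) *
            ((x2 - x1) ^ 2 + (A x2 - A x1) ^ 2))) *
          (∫ t in x2..x1, (A' t - A' x1)) * (∫ t in x3..x1, (A' t - A' x1)) +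
        (1 / ((1 + (A' x2) ^ 2) * ((x3 - x2) ^ 2 + (A x3 - A x2) ^ 2) *
            ((x2 - x1) ^ 2 + (A x2 - A x1) ^ 2))) *
          (∫ t in x1..x2, (A' t - A' x2)) * (∫ t in x3..x2, (A' t - A' x2)) +
        (1 / ((1 + (A' x3) ^ 2) * ((x3 - x2) ^ 2 + (A x3 - A x2) ^ 2) *
            ((x3 - x1) ^ 2 + (A x3 - A x1) ^ 2))) *
          (∫ t in x1..x3, (A' t - A' x3)) * (∫ t in x2..x3, (A' t - A' x3)))| ≤
      (3 / 2) * M ^ 2 :=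
  stmt9_general A A' J hJ M hLip x1 x2 x3 h1 h2 h3 h12 h13 h23
end

section
/- Let A : J → ℝ be C¹ with |A'(x) − A'(y)| ≤ M|x−y| for all x, y ∈ J. Then for any three distinct points u, x, v ∈ J, the squared Menger curvature of the graph points (u,A(u)), (x,A(x)), (v,A(v)) satisfies c² ≤ 8M². -/
open Complex

lemma key_mvt (A A' : ℝ → ℝ) (J : Set ℝ) (hJ : J.OrdConnected) (M : ℝ)
    (hd1 : ∀ x ∈ J, HasDerivAt A (A' x) x)
    (hLip : ∀ x ∈ J, ∀ y ∈ J, |A' x - A' y| ≤ M * |x - y|)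
    (a b c : ℝ) (ha : a ∈ J) (hb : b ∈ J) (hc : c ∈ J)
    (hab : a < b) (hbc : b < c) :
    |(b - a) * (A c - A a) - (A b - A a) * (c - a)| ≤ M * (|a - b| * (|b - c| * |c - a|)) := by
  have hM : 0 ≤ M := by
    have := hLip a ha b hb
    have h2 : (0:ℝ) < |a - b| := abs_pos.mpr (by linarith)
    nlinarith [abs_nonneg (A' a - A' b)]
  have hIab : Set.Icc a b ⊆ J := hJ.out ha hb
  have hIbc : Set.Icc b c ⊆ J := hJ.out hb hc
  have hIac : Set.Icc a c ⊆ J := hJ.out ha hc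
  obtain ⟨ξ, hξm, hξ⟩ := exists_hasDerivAt_eq_slope A A' hab
    (fun t ht => (hd1 t (hIab ht)).continuousAt.continuousWithinAt)
    (fun t ht => hd1 t (hIab (Set.Ioo_subset_Icc_self ht)))
  obtain ⟨η, hηm, hη⟩ := exists_hasDerivAt_eq_slope A A' hbc
    (fun t ht => (hd1 t (hIbc ht)).continuousAt.continuousWithinAt)
    (fun t ht => hd1 t (hIbc (Set.Ioo_subset_Icc_self ht)))
  have hξJ : ξ ∈ J := hIac ⟨hξm.1.le, by linarith [hξm.2, hbc]⟩
  have hηJ : η ∈ J := hIac ⟨by linarith [hηm.1, hab], hηm.2.le⟩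
  have hN : (b - a) * (A c - A a) - (A b - A a) * (c - a)
      = (b - a) * ((c - b) * (A' η - A' ξ)) := by
    have h1 : b - a ≠ 0 := by linarith
    have h2 : c - b ≠ 0 := by linarith
    rw [hξ, hη]
    field_simp
    ring
  have hlip2 : |A' η - A' ξ| ≤ M * (c - a) := by
    have := hLip η hηJ ξ hξJ
    have h3 : |η - ξ| ≤ c - a := by
      rw [abs_of_pos (by linarith [hξm.2, hηm.1])]
      linarith [hξm.1, hηm.2]
    nlinarith
  rw [hN, abs_mul, abs_mul, abs_of_pos (by linarith : (0:ℝ) < b - a),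
    abs_of_pos (by linarith : (0:ℝ) < c - b), abs_sub_comm a b, abs_sub_comm b c,
    abs_of_pos (by linarith : (0:ℝ) < b - a),
    abs_of_pos (by linarith : (0:ℝ) < c - b), abs_of_pos (by linarith : (0:ℝ) < c - a)]
  have hp : (0:ℝ) < (b - a) * (c - b) := by nlinarith
  have := mul_le_mul_of_nonneg_left hlip2 hp.le
  nlinarith [this]

lemma Nbound (A A' : ℝ → ℝ) (J : Set ℝ) (hJ : J.OrdConnected) (M : ℝ)
    (hd1 : ∀ x ∈ J, HasDerivAt A (A' x) x)
    (hLip : ∀ x ∈ J, ∀ y ∈ J, |A' x - A' y| ≤ M * |x - y|)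
    (u x v : ℝ) (hu : u ∈ J) (hx : x ∈ J) (hv : v ∈ J)
    (hux : u ≠ x) (huv : u ≠ v) (hxv : x ≠ v) :
    |(x - u) * (A v - A u) - (A x - A u) * (v - u)| ≤ M * (|u - x| * (|x - v| * |v - u|)) := by
  rcases hux.lt_or_gt with h1 | h1 <;> rcases huv.lt_or_gt with h2 | h2 <;>
    rcases hxv.lt_or_gt with h3 | h3
  · calc |(x - u) * (A v - A u) - (A x - A u) * (v - u)|
        = |(x - u) * (A v - A u) - (A x - A u) * (v - u)| := rfl
      _ ≤ M * (|u - x| * (|x - v| * |v - u|)) :=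
          key_mvt A A' J hJ M hd1 hLip u x v hu hx hv h1 h3
  · calc |(x - u) * (A v - A u) - (A x - A u) * (v - u)|
        = |(v - u) * (A x - A u) - (A v - A u) * (x - u)| := by
          rw [abs_eq_abs]; right; ring
      _ ≤ M * (|u - v| * (|v - x| * |x - u|)) :=
          key_mvt A A' J hJ M hd1 hLip u v x hu hv hx h2 h3
      _ = M * (|u - x| * (|x - v| * |v - u|)) := by
          simp only [abs_sub_comm x u, abs_sub_comm v u, abs_sub_comm v x]; ring
  · exact absurd (h3.trans h2) (by linarith)
  · calc |(x - u) * (A v - A u) - (A x - A u) * (v - u)|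
        = |(u - v) * (A x - A v) - (A u - A v) * (x - v)| := by
          rw [abs_eq_abs]; left; ring
      _ ≤ M * (|v - u| * (|u - x| * (|x - v|))) :=
          key_mvt A A' J hJ M hd1 hLip v u x hv hu hx h2 h1
      _ = M * (|u - x| * (|x - v| * |v - u|)) := by
          simp only [abs_sub_comm x u, abs_sub_comm v u, abs_sub_comm v x]; ring
  · calc |(x - u) * (A v - A u) - (A x - A u) * (v - u)|
        = |(u - x) * (A v - A x) - (A u - A x) * (v - x)| := by
          rw [abs_eq_abs]; right; ring
      _ ≤ M * (|x - u| * (|u - v| * (|v - x|))) :=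
          key_mvt A A' J hJ M hd1 hLip x u v hx hu hv h1 h2
      _ = M * (|u - x| * (|x - v| * |v - u|)) := by
          simp only [abs_sub_comm x u, abs_sub_comm v u, abs_sub_comm v x]; ring
  · exact absurd (h2.trans h3) (by linarith)
  · calc |(x - u) * (A v - A u) - (A x - A u) * (v - u)|
        = |(v - x) * (A u - A x) - (A v - A x) * (u - x)| := by
          rw [abs_eq_abs]; left; ring
      _ ≤ M * (|x - v| * (|v - u| * (|u - x|))) :=
          key_mvt A A' J hJ M hd1 hLip x v u hx hv hu h3 h2
      _ = M * (|u - x| * (|x - v| * |v - u|)) := by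
          simp only [abs_sub_comm x u, abs_sub_comm v u, abs_sub_comm v x]; ring
  · calc |(x - u) * (A v - A u) - (A x - A u) * (v - u)|
        = |(x - v) * (A u - A v) - (A x - A v) * (u - v)| := by
          rw [abs_eq_abs]; right; ring
      _ ≤ M * (|v - x| * (|x - u| * (|u - v|))) :=
          key_mvt A A' J hJ M hd1 hLip v x u hv hx hu h3 h1
      _ = M * (|u - x| * (|x - v| * |v - u|)) := by
          simp only [abs_sub_comm x u, abs_sub_comm v u, abs_sub_comm v x]; ring

/-- If `A'` is `M`-Lipschitz on `J`, the squared Menger curvature of any three distinct points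
on the graph of `A` is at most `8M²`. -/
theorem stmt10 (A A' : ℝ → ℝ) (J : Set ℝ) (hJ : J.OrdConnected) (M : ℝ)
    (hd1 : ∀ x ∈ J, HasDerivAt A (A' x) x)
    (hLip : ∀ x ∈ J, ∀ y ∈ J, |A' x - A' y| ≤ M * |x - y|)
    (u x v : ℝ) (hu : u ∈ J) (hx : x ∈ J) (hv : v ∈ J)
    (hux : u ≠ x) (huv : u ≠ v) (hxv : x ≠ v) :
    (menger (u + A u * Complex.I) (x + A x * Complex.I) (v + A v * Complex.I)) ^ 2 ≤
      8 * M ^ 2 := by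
  set z1 : ℂ := u + A u * Complex.I with hz1
  set z2 : ℂ := x + A x * Complex.I with hz2
  set z3 : ℂ := v + A v * Complex.I with hz3
  have hM : 0 ≤ M := by
    have := hLip u hu x hx
    have h2 : (0:ℝ) < |u - x| := abs_pos.mpr (sub_ne_zero.mpr hux)
    nlinarith [abs_nonneg (A' u - A' x)]
  have him : ((starRingEnd ℂ) (z2 - z1) * (z3 - z1)).im
      = (x - u) * (A v - A u) - (A x - A u) * (v - u) := by
    simp [hz1, hz2, hz3, Complex.mul_im]
    ring
  have hre1 : (z1 - z2).re = u - x := by simp [hz1, hz2]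
  have hre2 : (z2 - z3).re = x - v := by simp [hz2, hz3]
  have hre3 : (z3 - z1).re = v - u := by simp [hz3, hz1]
  have habs1 : |u - x| ≤ ‖z1 - z2‖ := hre1 ▸ Complex.abs_re_le_norm _
  have habs2 : |x - v| ≤ ‖z2 - z3‖ := hre2 ▸ Complex.abs_re_le_norm _
  have habs3 : |v - u| ≤ ‖z3 - z1‖ := hre3 ▸ Complex.abs_re_le_norm _
  have hp1 : (0:ℝ) < |u - x| := abs_pos.mpr (sub_ne_zero.mpr hux)
  have hp2 : (0:ℝ) < |x - v| := abs_pos.mpr (sub_ne_zero.mpr hxv)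
  have hp3 : (0:ℝ) < |v - u| := abs_pos.mpr (sub_ne_zero.mpr (Ne.symm huv))
  have hd1' : (0:ℝ) < ‖z1 - z2‖ := lt_of_lt_of_le hp1 habs1
  have hd2' : (0:ℝ) < ‖z2 - z3‖ := lt_of_lt_of_le hp2 habs2
  have hd3' : (0:ℝ) < ‖z3 - z1‖ := lt_of_lt_of_le hp3 habs3
  have hD : (0:ℝ) < ‖z1 - z2‖ * ‖z2 - z3‖ * ‖z3 - z1‖ := by
    positivity
  have hm0 : 0 ≤ menger z1 z2 z3 := by
    unfold menger
    positivity
  have hm2 : menger z1 z2 z3 ≤ 2 * M := by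
    unfold menger
    rw [div_le_iff₀ hD, him]
    have hNb := Nbound A A' J hJ M hd1 hLip u x v hu hx hv hux huv hxv
    calc 2 * |(x - u) * (A v - A u) - (A x - A u) * (v - u)|
        ≤ 2 * (M * (|u - x| * (|x - v| * |v - u|))) := by linarith
      _ ≤ 2 * (M * (‖z1 - z2‖ * (‖z2 - z3‖ * ‖z3 - z1‖))) := by
          gcongr
      _ = 2 * M * (‖z1 - z2‖ * ‖z2 - z3‖ * ‖z3 - z1‖) := by
          ring
  nlinarith [hm0, hm2, hM]
end

section
/- Let A : J → ℝ be C² with A''(x) ≥ 0 for all x ∈ J (or A''(x) ≤ 0 for all x ∈ J). Then for any three distinct points x1, x2, x3 ∈ J, the symmetrized real part S[Re K_Γ](z) = 2·Σ_j (1/(s²(x_j)·ℓ_k²·ℓ_l²)) · [∫_{x_k}^{x_j}(A'(t)−A'(x_j))dt] · [∫_{x_l}^{x_j}(A'(t)−A'(x_j))dt] is nonnegative. -/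
/-!
Each of the three summands is a nonnegative weight times a product of two integrals
`∫_{x_k}^{x_j} (A' t - A' x_j) dt`. If `A'' ≥ 0` then `A'` is monotone, so each such integral
is `≤ 0` whatever the order of `x_k` and `x_j`, and the product is `≥ 0`; if `A'' ≤ 0`,
replacing `A'` by `-A'` changes the sign of both factors but not the product.
-/

open intervalIntegral

lemma monotoneOn_of_hasDerivAt_nonneg {D : Set ℝ} (hD : Convex ℝ D) {f f' : ℝ → ℝ}
    (hf : ∀ x ∈ D, HasDerivAt f (f' x) x) (hf' : ∀ x ∈ D, 0 ≤ f' x) : MonotoneOn f D :=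
  monotoneOn_of_hasDerivWithinAt_nonneg hD (fun x hx => (hf x hx).continuousAt.continuousWithinAt)
    (fun x hx => (hf x (interior_subset hx)).hasDerivWithinAt) fun x hx => hf' x (interior_subset hx)

lemma antitoneOn_of_hasDerivAt_nonpos {D : Set ℝ} (hD : Convex ℝ D) {f f' : ℝ → ℝ}
    (hf : ∀ x ∈ D, HasDerivAt f (f' x) x) (hf' : ∀ x ∈ D, f' x ≤ 0) : AntitoneOn f D :=
  antitoneOn_of_hasDerivWithinAt_nonpos hD (fun x hx => (hf x hx).continuousAt.continuousWithinAt)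
    (fun x hx => (hf x (interior_subset hx)).hasDerivWithinAt) fun x hx => hf' x (interior_subset hx)

section

variable {f : ℝ → ℝ} {J : Set ℝ} {a b c : ℝ}

lemma MonotoneOn.integral_sub_right_nonpos (hf : MonotoneOn f J) (hJ : J.OrdConnected)
    (ha : a ∈ J) (hb : b ∈ J) : ∫ t in a..b, (f t - f b) ≤ 0 := by
  rcases le_total a b with hab | hba
  · rw [← neg_nonneg, ← integral_neg]
    exact integral_nonneg hab fun t ht => neg_nonneg.2 <| sub_nonpos.2 <| hf (hJ.out ha hb ht) hb ht.2
  · rw [integral_symm, neg_nonpos]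
    exact integral_nonneg hba fun t ht => sub_nonneg.2 <| hf hb (hJ.out hb ha ht) ht.1

lemma MonotoneOn.integral_sub_right_mul_nonneg (hf : MonotoneOn f J) (hJ : J.OrdConnected)
    (ha : a ∈ J) (hb : b ∈ J) (hc : c ∈ J) :
    0 ≤ (∫ t in a..b, (f t - f b)) * ∫ t in c..b, (f t - f b) :=
  mul_nonneg_of_nonpos_of_nonpos (hf.integral_sub_right_nonpos hJ ha hb)
    (hf.integral_sub_right_nonpos hJ hc hb)

lemma AntitoneOn.integral_sub_right_mul_nonneg (hf : AntitoneOn f J) (hJ : J.OrdConnected)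
    (ha : a ∈ J) (hb : b ∈ J) (hc : c ∈ J) :
    0 ≤ (∫ t in a..b, (f t - f b)) * ∫ t in c..b, (f t - f b) := by
  simpa only [← neg_sub', integral_neg, neg_mul_neg] using
    hf.neg.integral_sub_right_mul_nonneg hJ ha hb hc

end

theorem stmt12_general (A A' A'' : ℝ → ℝ) (J : Set ℝ) (hJ : J.OrdConnected)
    (hd2 : ∀ x ∈ J, HasDerivAt A' (A'' x) x)
    (hsign : (∀ x ∈ J, 0 ≤ A'' x) ∨ (∀ x ∈ J, A'' x ≤ 0))
    (x1 x2 x3 : ℝ) (h1 : x1 ∈ J) (h2 : x2 ∈ J) (h3 : x3 ∈ J) :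
    0 ≤ 2 * ((1 / ((1 + (A' x1) ^ 2) * ((x3 - x1) ^ 2 + (A x3 - A x1) ^ 2) *
            ((x2 - x1) ^ 2 + (A x2 - A x1) ^ 2))) *
          (∫ t in x2..x1, (A' t - A' x1)) * (∫ t in x3..x1, (A' t - A' x1)) +
        (1 / ((1 + (A' x2) ^ 2) * ((x3 - x2) ^ 2 + (A x3 - A x2) ^ 2) *
            ((x2 - x1) ^ 2 + (A x2 - A x1) ^ 2))) *
          (∫ t in x1..x2, (A' t - A' x2)) * (∫ t in x3..x2, (A' t - A' x2)) +
        (1 / ((1 + (A' x3) ^ 2) * ((x3 - x2) ^ 2 + (A x3 - A x2) ^ 2) *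
            ((x3 - x1) ^ 2 + (A x3 - A x1) ^ 2))) *
          (∫ t in x1..x3, (A' t - A' x3)) * (∫ t in x2..x3, (A' t - A' x3))) := by
  have hprod : ∀ {a b c}, a ∈ J → b ∈ J → c ∈ J →
      0 ≤ (∫ t in a..b, (A' t - A' b)) * ∫ t in c..b, (A' t - A' b) := by
    rcases hsign with hs | hs
    · exact (monotoneOn_of_hasDerivAt_nonneg hJ.convex hd2 hs).integral_sub_right_mul_nonneg hJ
    · exact (antitoneOn_of_hasDerivAt_nonpos hJ.convex hd2 hs).integral_sub_right_mul_nonneg hJ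
  simp only [mul_assoc]
  refine mul_nonneg zero_le_two (add_nonneg (add_nonneg ?_ ?_) ?_)
  · exact mul_nonneg (by positivity) (hprod h2 h1 h3)
  · exact mul_nonneg (by positivity) (hprod h1 h2 h3)
  · exact mul_nonneg (by positivity) (hprod h1 h3 h2)

/-- If `A` is `C²` with fixed concavity on `J`, then the symmetrized real part of the
restricted Cauchy kernel on the graph of `A` is nonnegative. -/
theorem stmt12 (A A' A'' : ℝ → ℝ) (J : Set ℝ) (hJ : J.OrdConnected)
    (hd1 : ∀ x ∈ J, HasDerivAt A (A' x) x)
    (hd2 : ∀ x ∈ J, HasDerivAt A' (A'' x) x)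
    (hcont : ContinuousOn A'' J)
    (hsign : (∀ x ∈ J, 0 ≤ A'' x) ∨ (∀ x ∈ J, A'' x ≤ 0))
    (x1 x2 x3 : ℝ) (h1 : x1 ∈ J) (h2 : x2 ∈ J) (h3 : x3 ∈ J)
    (h12 : x1 ≠ x2) (h13 : x1 ≠ x3) (h23 : x2 ≠ x3) :
    0 ≤ 2 * ((1 / ((1 + (A' x1) ^ 2) * ((x3 - x1) ^ 2 + (A x3 - A x1) ^ 2) *
            ((x2 - x1) ^ 2 + (A x2 - A x1) ^ 2))) *
          (∫ t in x2..x1, (A' t - A' x1)) * (∫ t in x3..x1, (A' t - A' x1)) +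
        (1 / ((1 + (A' x2) ^ 2) * ((x3 - x2) ^ 2 + (A x3 - A x2) ^ 2) *
            ((x2 - x1) ^ 2 + (A x2 - A x1) ^ 2))) *
          (∫ t in x1..x2, (A' t - A' x2)) * (∫ t in x3..x2, (A' t - A' x2)) +
        (1 / ((1 + (A' x3) ^ 2) * ((x3 - x2) ^ 2 + (A x3 - A x2) ^ 2) *
            ((x3 - x1) ^ 2 + (A x3 - A x1) ^ 2))) *
          (∫ t in x1..x3, (A' t - A' x3)) * (∫ t in x2..x3, (A' t - A' x3))) :=
  stmt12_general A A' A'' J hJ hd2 hsign x1 x2 x3 h1 h2 h3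
end
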